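/- arXiv:2010.01631 — 5 statements merged into one kernel-verified Lean document; each statement's English description precedes it below -/
import Mathlib

section
/- For any valid assignment x, k·V_k(x) + z(x) = C, where z(x) = Σ_{j=1}^k (k-j+1)·Q_j(x) and C = Σ_{i=1}^n (1/2)(1 + 1/k_i)·k·s_i + ((1+k)k/2)·D is a constant independent of x. -/
/-!
Everything is additive over the items, so it suffices to check the identity for a single item
with cycle length `m ∣ k`, `k = m q`, reordering at times `τ, τ + m, …, τ + (q - 1) m`. Its stock
at time `k` is `s τ / m`, and its orders contribute the arithmetic progression
`∑_{t < q} (k - τ - t m + 1) s`; the `τ`-dependent terms `k s τ / m - q s τ` cancel, leaving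
`s (k q / 2 + q + k / 2)`, which is the item's share of `C`.
-/

open Finset

lemma filter_Icc_sub_emod_eq_zero {m τ : ℕ} (hτ : 1 ≤ τ) (hτm : τ ≤ m) (q : ℕ) :
    (Icc 1 (m * q)).filter (fun j : ℕ => ((j : ℤ) - τ) % m = 0) =
      (range q).image (fun t => τ + t * m) := by
  ext j
  simp only [mem_filter, mem_Icc, mem_image, mem_range]
  constructor
  · rintro ⟨⟨hj1, hjk⟩, hmod⟩
    obtain ⟨c, hc⟩ := Int.dvd_of_emod_eq_zero hmod
    have hc0 : 0 ≤ c := by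
      by_contra! h
      have : (m : ℤ) * c ≤ -m := by nlinarith
      omega
    lift c to ℕ using hc0
    have hcq : c < q := by
      by_contra! h
      have : (m : ℤ) * q ≤ m * c := by exact_mod_cast Nat.mul_le_mul_left m h
      omega
    exact ⟨c, hcq, by zify; linarith⟩
  · rintro ⟨t, ht, rfl⟩
    refine ⟨⟨by omega, by nlinarith⟩, ?_⟩
    push_cast
    simp

lemma sum_Icc_ite_sub_emod_eq_zero {M : Type*} [AddCommMonoid M] {m τ : ℕ} (hτ : 1 ≤ τ)
    (hτm : τ ≤ m) (q : ℕ) (f : ℕ → M) :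
    ∑ j ∈ Icc 1 (m * q), (if ((j : ℤ) - τ) % m = 0 then f j else 0) =
      ∑ t ∈ range q, f (τ + t * m) := by
  rw [← sum_filter, filter_Icc_sub_emod_eq_zero hτ hτm, sum_image]
  intro a _ b _ hab
  exact Nat.eq_of_mul_eq_mul_right (by omega) (Nat.add_left_cancel hab)

lemma mul_sub_emod_self {m τ : ℕ} (hτ : 1 ≤ τ) (hτm : τ ≤ m) (q : ℕ) :
    ((((m * q : ℕ) : ℤ) - τ) % m) = m - τ := by
  have h : (((m * q : ℕ) : ℤ) - τ) = (m - τ) + m * (q - 1) := by push_cast; ring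
  rw [h, Int.add_mul_emod_self_left, Int.emod_eq_of_lt] <;> omega

lemma sum_range_sub_mul {K : Type*} [Field K] [CharZero K] (a b : K) (q : ℕ) :
    ∑ t ∈ range q, (a - t * b) = q * a - b * (q * (q - 1) / 2) := by
  induction q with
  | zero => simp
  | succ q ih => rw [sum_range_succ, ih]; push_cast; ring

theorem stock_mul_add_sum_weighted_orders {k m τ : ℕ} (hmk : m ∣ k) (hτ : 1 ≤ τ) (hτm : τ ≤ m)
    (s : ℝ) :
    (k : ℝ) * (s * ((m : ℝ) - ((((k : ℤ) - τ) % m : ℤ) : ℝ)) / m)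
      + ∑ j ∈ Icc 1 k, ((k : ℝ) - j + 1) * (s * if ((j : ℤ) - τ) % m = 0 then 1 else 0)
      = 1 / 2 * (1 + 1 / (m : ℝ)) * k * s + ((1 + (k : ℝ)) * k / 2) * (s / m) := by
  obtain ⟨q, rfl⟩ := hmk
  have hm : (m : ℝ) ≠ 0 := by norm_cast; omega
  have horders : ∑ j ∈ Icc 1 (m * q), ((((m * q : ℕ) : ℝ) - j + 1) *
        (s * if ((j : ℤ) - τ) % m = 0 then 1 else 0)) =
      ∑ t ∈ range q, ((((m * q : ℕ) : ℝ) - τ + 1) * s - t * (m * s)) := by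
    simp_rw [mul_ite, mul_one, mul_zero]
    rw [sum_Icc_ite_sub_emod_eq_zero hτ hτm]
    refine sum_congr rfl fun t _ => ?_
    push_cast
    ring
  rw [horders, sum_range_sub_mul, mul_sub_emod_self hτ hτm]
  push_cast
  field_simp
  ring

theorem stmt_1_general (n k : ℕ) (kc : ℕ → ℕ) (s : ℕ → ℝ) (τ : ℕ → ℕ)
    (x : ℕ → ℕ → ℝ) (V : ℕ → ℝ) (D z C : ℝ)
    (hkc : ∀ i < n, 0 < kc i ∧ kc i ∣ k)
    (hτ : ∀ i < n, 1 ≤ τ i ∧ τ i ≤ kc i)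
    (hx : ∀ i j, x i j = if ((j : ℤ) - (τ i : ℤ)) % (kc i : ℤ) = 0 then 1 else 0)
    (hV : ∀ ℓ, V ℓ = ∑ i ∈ Finset.range n,
      s i * ((kc i : ℝ) - ((((ℓ : ℤ) - (τ i : ℤ)) % (kc i : ℤ) : ℤ) : ℝ)) / (kc i : ℝ))
    (hD : D = ∑ i ∈ Finset.range n, s i / (kc i : ℝ))
    (hz : z = ∑ j ∈ Finset.Icc 1 k, ((k : ℝ) - (j : ℝ) + 1) *
      ∑ i ∈ Finset.range n, s i * x i j)
    (hC : C = ∑ i ∈ Finset.range n, (1/2) * (1 + 1/(kc i : ℝ)) * (k : ℝ) * s i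
      + ((1 + (k : ℝ)) * (k : ℝ) / 2) * D) :
    (k : ℝ) * V k + z = C := by
  simp only [hV, hz, hC, hD, hx, mul_sum]
  rw [sum_comm (s := Icc 1 k), ← sum_add_distrib, ← sum_add_distrib]
  refine sum_congr rfl fun i hi => ?_
  have hin : i < n := mem_range.mp hi
  exact stock_mul_add_sum_weighted_orders (hkc i hin).2 (hτ i hin).1 (hτ i hin).2 (s i)

/-- For any valid assignment (given by reorder times `τ i ∈ {1,...,kc i}`),
`k·V k + z = C`, where `z = ∑_{j=1}^k (k-j+1)·Q j` and
`C = ∑_i (1/2)(1 + 1/kc i)·k·s i + ((1+k)k/2)·D`. -/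
theorem stmt_1 (n k : ℕ) (kc : ℕ → ℕ) (s : ℕ → ℝ) (τ : ℕ → ℕ)
    (x : ℕ → ℕ → ℝ) (V : ℕ → ℝ) (D z C : ℝ)
    (hk : 0 < k)
    (hs : ∀ i < n, 0 ≤ s i)
    (hkc : ∀ i < n, 0 < kc i ∧ kc i ∣ k)
    (hτ : ∀ i < n, 1 ≤ τ i ∧ τ i ≤ kc i)
    (hx : ∀ i j, x i j = if ((j : ℤ) - (τ i : ℤ)) % (kc i : ℤ) = 0 then 1 else 0)
    (hV : ∀ ℓ, V ℓ = ∑ i ∈ Finset.range n,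
      s i * ((kc i : ℝ) - ((((ℓ : ℤ) - (τ i : ℤ)) % (kc i : ℤ) : ℤ) : ℝ)) / (kc i : ℝ))
    (hD : D = ∑ i ∈ Finset.range n, s i / (kc i : ℝ))
    (hz : z = ∑ j ∈ Finset.Icc 1 k, ((k : ℝ) - (j : ℝ) + 1) *
      ∑ i ∈ Finset.range n, s i * x i j)
    (hC : C = ∑ i ∈ Finset.range n, (1/2) * (1 + 1/(kc i : ℝ)) * (k : ℝ) * s i
      + ((1 + (k : ℝ)) * (k : ℝ) / 2) * D) :
    (k : ℝ) * V k + z = C :=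
  stmt_1_general n k kc s τ x V D z C hkc hτ hx hV hD hz hC
end

section
/- For any valid assignment x, there exists a cyclic shift permutation π of {1,...,k} such that the shifted assignment x' defined by x'_{ij} = x_{i,π(j)} is a valid assignment, attains its peak inventory level at time k, and V_k(x') = V(x') = V(x), where V(x) = max_{ℓ∈{1,...,k}} V_ℓ(x). -/
/-!
The shift `π = cyclicShift k (m % k)` sends time `k` to a time `m` at which the inventory of `x`
peaks; since `V_ℓ(x') = V_{π(ℓ)}(x)` and `π` maps `{1, …, k}` into itself, the shifted schedule peaks at
time `k` with the same peak value. Validity survives the shift because every cycle length `k_i`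
divides `k`, so `π(j) ≡ j + t (mod k_i)`: the shifted assignment of item `i` is again the
indicator of a single residue class modulo `k_i`, which meets `{1, …, k_i}` exactly once.
-/

open Finset

def cyclicShift (k t j : ℕ) : ℕ := (j + t - 1) % k + 1

lemma cyclicShift_mem_Icc {k : ℕ} (hk : 0 < k) (t j : ℕ) : cyclicShift k t j ∈ Icc 1 k :=
  mem_Icc.mpr ⟨Nat.le_add_left _ _, Nat.mod_lt _ hk⟩

lemma cyclicShift_self_mod {k m : ℕ} (hm : m ∈ Icc 1 k) : cyclicShift k (m % k) k = m := by
  obtain ⟨hm1, hmk⟩ := mem_Icc.mp hm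
  unfold cyclicShift
  rcases hmk.lt_or_eq with hlt | rfl
  · rw [Nat.mod_eq_of_lt hlt, show k + m - 1 = m - 1 + k by omega, Nat.add_mod_right,
      Nat.mod_eq_of_lt (by omega)]
    omega
  · rw [Nat.mod_self, Nat.add_zero, Nat.mod_eq_of_lt (by omega)]
    omega

lemma cyclicShift_emod_of_dvd {k c : ℕ} (hc : c ∣ k) (t : ℕ) {j : ℕ} (hj : 1 ≤ j) :
    (cyclicShift k t j : ℤ) % c = ((j : ℤ) + t) % c := by
  have hcast : (cyclicShift k t j : ℤ) = ((j : ℤ) + t - 1) % k + 1 := by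
    unfold cyclicShift
    push_cast [Int.natCast_mod, show ((j + t - 1 : ℕ) : ℤ) = (j : ℤ) + t - 1 by omega]
    ring
  rw [hcast, Int.add_emod, Int.emod_emod_of_dvd _ (Int.natCast_dvd_natCast.mpr hc),
    ← Int.add_emod, sub_add_cancel]

lemma sum_Icc_ite_add_emod_eq_zero {R : Type*} [AddCommMonoidWithOne R] {c : ℕ} (hc : 0 < c)
    (a : ℤ) : ∑ j ∈ Icc 1 c, (if ((j : ℤ) + a) % c = 0 then (1 : R) else 0) = 1 := by
  have hc' : (0 : ℤ) < c := by exact_mod_cast hc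
  set r := (-a - 1) % c
  have hr0 : 0 ≤ r := Int.emod_nonneg _ hc'.ne'
  have hrc : r < c := Int.emod_lt_of_pos _ hc'
  -- for `1 ≤ j ≤ c`, `j - 1` is its own residue, so `c ∣ j + a` pins down `j - 1 = r`
  have hroot : ∀ j ∈ Icc 1 c, ((j : ℤ) + a) % c = 0 ↔ j = r.toNat + 1 := by
    intro j hj
    obtain ⟨hj1, hjc⟩ := mem_Icc.mp hj
    have hres : ((j : ℤ) - 1) % c = (j : ℤ) - 1 := Int.emod_eq_of_lt (by omega) (by omega)
    rw [← Int.dvd_iff_emod_eq_zero, show (j : ℤ) + a = ((j : ℤ) - 1) - (-a - 1) by ring,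
      ← Int.modEq_iff_dvd, Int.ModEq, hres]
    omega
  rw [sum_boole, card_eq_one.mpr ⟨r.toNat + 1, ?_⟩, Nat.cast_one]
  ext j
  simp only [mem_filter, mem_singleton]
  constructor
  · rintro ⟨hj, hzero⟩
    exact (hroot j hj).mp hzero
  · rintro rfl
    have hmem : r.toNat + 1 ∈ Icc 1 c := mem_Icc.mpr ⟨by omega, by omega⟩
    exact ⟨hmem, (hroot _ hmem).mpr rfl⟩

theorem stmt_3_general (n k : ℕ) (kc : ℕ → ℕ) (τ : ℕ → ℕ)
    (x : ℕ → ℕ → ℝ) (V : ℕ → ℝ)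
    (hk : 0 < k)
    (hkc : ∀ i < n, 0 < kc i ∧ kc i ∣ k)
    (hx : ∀ i j, x i j = if ((j : ℤ) - (τ i : ℤ)) % (kc i : ℤ) = 0 then 1 else 0) :
    ∃ t < k,
      -- the shifted assignment x' i j = x i ((j + t - 1) % k + 1) is valid:
      (∀ i < n, ∑ j ∈ Finset.Icc 1 (kc i), x i ((j + t - 1) % k + 1) = 1) ∧
      (∀ i < n, ∀ j, kc i < j → j ≤ k →
        x i ((j + t - 1) % k + 1) = x i ((j - kc i + t - 1) % k + 1)) ∧
      -- the shifted schedule attains its peak inventory level at time k: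
      (∀ ℓ ∈ Finset.Icc 1 k, V ((ℓ + t - 1) % k + 1) ≤ V ((k + t - 1) % k + 1)) ∧
      -- and this peak equals the peak inventory level of x:
      (∀ ℓ ∈ Finset.Icc 1 k, V ℓ ≤ V ((k + t - 1) % k + 1)) ∧
      (∃ ℓ ∈ Finset.Icc 1 k, V ℓ = V ((k + t - 1) % k + 1)) := by
  obtain ⟨m, hm, hmax⟩ := exists_max_image (Icc 1 k) V ⟨k, mem_Icc.mpr ⟨hk, le_rfl⟩⟩
  set t := m % k
  have hpeak : cyclicShift k t k = m := cyclicShift_self_mod hm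
  have hx_shift : ∀ i < n, ∀ j, 1 ≤ j → x i (cyclicShift k t j) =
      if ((j : ℤ) + ((t : ℤ) - τ i)) % kc i = 0 then 1 else 0 := by
    intro i hi j hj
    rw [hx, ← add_sub_assoc, Int.sub_emod, cyclicShift_emod_of_dvd (hkc i hi).2 t hj,
      ← Int.sub_emod]
  have hV_peak : ∀ ℓ ∈ Icc 1 k, V ℓ ≤ V (cyclicShift k t k) := fun ℓ hℓ => hpeak ▸ hmax ℓ hℓ
  refine ⟨t, Nat.mod_lt _ hk, fun i hi => ?_, fun i hi j hij hjk => ?_,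
    fun ℓ _ => hV_peak _ (cyclicShift_mem_Icc hk t ℓ), hV_peak, ⟨m, hm, congrArg V hpeak.symm⟩⟩
  · calc ∑ j ∈ Icc 1 (kc i), x i (cyclicShift k t j)
        = ∑ j ∈ Icc 1 (kc i), if ((j : ℤ) + ((t : ℤ) - τ i)) % kc i = 0 then (1 : ℝ) else 0 :=
          sum_congr rfl fun j hj => hx_shift i hi j (mem_Icc.mp hj).1
      _ = 1 := sum_Icc_ite_add_emod_eq_zero (hkc i hi).1 _
  · change x i (cyclicShift k t j) = x i (cyclicShift k t (j - kc i))
    rw [hx_shift i hi j (by omega), hx_shift i hi (j - kc i) (by omega),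
      Nat.cast_sub hij.le, sub_add_eq_add_sub, Int.sub_emod_right]

/-- For any valid assignment `x` (given by reorder times `τ`),
there is a cyclic shift `π(j) = ((j + t - 1) mod k) + 1` such that the shifted
assignment `x' i j = x i (π j)` is a valid assignment, attains its peak inventory
level at time `k`, and `V_k(x') = V(x') = V(x)` (note `V_ℓ(x') = V_{π(ℓ)}(x)`). -/
theorem stmt_3 (n k : ℕ) (kc : ℕ → ℕ) (s : ℕ → ℝ) (τ : ℕ → ℕ)
    (x : ℕ → ℕ → ℝ) (V : ℕ → ℝ)
    (hk : 0 < k)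
    (hs : ∀ i < n, 0 ≤ s i)
    (hkc : ∀ i < n, 0 < kc i ∧ kc i ∣ k)
    (hτ : ∀ i < n, 1 ≤ τ i ∧ τ i ≤ kc i)
    (hx : ∀ i j, x i j = if ((j : ℤ) - (τ i : ℤ)) % (kc i : ℤ) = 0 then 1 else 0)
    (hV : ∀ ℓ, V ℓ = ∑ i ∈ Finset.range n,
      s i * ((kc i : ℝ) - ((((ℓ : ℤ) - (τ i : ℤ)) % (kc i : ℤ) : ℤ) : ℝ)) / (kc i : ℝ)) :
    ∃ t < k,
      -- the shifted assignment x' i j = x i ((j + t - 1) % k + 1) is valid: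
      (∀ i < n, ∑ j ∈ Finset.Icc 1 (kc i), x i ((j + t - 1) % k + 1) = 1) ∧
      (∀ i < n, ∀ j, kc i < j → j ≤ k →
        x i ((j + t - 1) % k + 1) = x i ((j - kc i + t - 1) % k + 1)) ∧
      -- the shifted schedule attains its peak inventory level at time k:
      (∀ ℓ ∈ Finset.Icc 1 k, V ((ℓ + t - 1) % k + 1) ≤ V ((k + t - 1) % k + 1)) ∧
      -- and this peak equals the peak inventory level of x:
      (∀ ℓ ∈ Finset.Icc 1 k, V ℓ ≤ V ((k + t - 1) % k + 1)) ∧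
      (∃ ℓ ∈ Finset.Icc 1 k, V ℓ = V ((k + t - 1) % k + 1)) :=
  stmt_3_general n k kc τ x V hk hkc hx
end

section
/- Let μ = εD/(kn) with ε > 0, and scaled sizes s'_i = ⌊s_i/μ⌋, D' = D/μ. If the binary matrix x satisfies the scaled cascading constraints Σ_{j=1}^ℓ Σ_{i=1}^n s'_i·x_{ij} ≤ ℓD' for all ℓ = 1,...,k, then x satisfies the ε-relaxed cascading constraints Σ_{j=1}^ℓ Σ_{i=1}^n s_i·x_{ij} ≤ ℓD + εD for all ℓ = 1,...,k. -/
/-- With `μ = εD/(kn)`, `s' i = ⌊s i / μ⌋`, `D' = D/μ`: if the binary matrix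
`x` satisfies the scaled cascading constraints, then it satisfies the ε-relaxed cascading
constraints. -/
theorem stmt_5 (n k : ℕ) (kc : ℕ → ℕ) (s : ℕ → ℝ) (s' : ℕ → ℤ) (x : ℕ → ℕ → ℝ)
    (D D' ε μ : ℝ)
    (hn : 0 < n) (hk : 0 < k) (hε : 0 < ε)
    (hs : ∀ i < n, 0 < s i)
    (hD : D = ∑ i ∈ Finset.range n, s i / (kc i : ℝ)) (hDpos : 0 < D)
    (hμ : μ = ε * D / ((k : ℝ) * (n : ℝ)))
    (hs' : ∀ i, s' i = ⌊s i / μ⌋)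
    (hD' : D' = D / μ)
    (hbin : ∀ i j, x i j = 0 ∨ x i j = 1)
    (hscaled : ∀ ℓ, 1 ≤ ℓ → ℓ ≤ k →
      ∑ j ∈ Finset.Icc 1 ℓ, ∑ i ∈ Finset.range n, (s' i : ℝ) * x i j ≤ (ℓ : ℝ) * D') :
    ∀ ℓ, 1 ≤ ℓ → ℓ ≤ k →
      ∑ j ∈ Finset.Icc 1 ℓ, ∑ i ∈ Finset.range n, s i * x i j ≤ (ℓ : ℝ) * D + ε * D := by
  intro ℓ h1 h2
  have hkpos : (0:ℝ) < (k:ℝ) := by exact_mod_cast hk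
  have hnpos : (0:ℝ) < (n:ℝ) := by exact_mod_cast hn
  have hμpos : 0 < μ := by rw [hμ]; exact div_pos (mul_pos hε hDpos) (mul_pos hkpos hnpos)
  have key : ∀ i j, s i * x i j ≤ μ * ((s' i : ℝ) * x i j) + μ * x i j := by
    intro i j
    rcases hbin i j with h | h
    · simp [h]
    · have hfl : s i / μ < (s' i : ℝ) + 1 := by
        rw [hs' i]; push_cast; exact Int.lt_floor_add_one _
      have : s i < ((s' i : ℝ) + 1) * μ := (div_lt_iff₀ hμpos).mp hfl
      rw [h]; nlinarith
  calc ∑ j ∈ Finset.Icc 1 ℓ, ∑ i ∈ Finset.range n, s i * x i j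
      ≤ ∑ j ∈ Finset.Icc 1 ℓ, ∑ i ∈ Finset.range n,
          (μ * ((s' i : ℝ) * x i j) + μ * x i j) := by
        apply Finset.sum_le_sum; intro j _
        exact Finset.sum_le_sum fun i _ => key i j
    _ = μ * (∑ j ∈ Finset.Icc 1 ℓ, ∑ i ∈ Finset.range n, (s' i : ℝ) * x i j)
        + μ * (∑ j ∈ Finset.Icc 1 ℓ, ∑ i ∈ Finset.range n, x i j) := by
        simp [Finset.sum_add_distrib, Finset.mul_sum]
    _ ≤ μ * ((ℓ : ℝ) * D') + μ * ((ℓ : ℝ) * (n : ℝ)) := by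
        gcongr
        · exact hscaled ℓ h1 h2
        · calc ∑ j ∈ Finset.Icc 1 ℓ, ∑ i ∈ Finset.range n, x i j
              ≤ ∑ j ∈ Finset.Icc 1 ℓ, (n : ℝ) := by
                apply Finset.sum_le_sum; intro j _
                calc ∑ i ∈ Finset.range n, x i j ≤ ∑ i ∈ Finset.range n, 1 := by
                      apply Finset.sum_le_sum; intro i _
                      rcases hbin i j with h | h <;> simp [h]
                  _ = (n : ℝ) := by simp
            _ = (ℓ : ℝ) * (n : ℝ) := by
                rw [Finset.sum_const, Nat.card_Icc]; push_cast; ring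
    _ ≤ (ℓ : ℝ) * D + ε * D := by
        have e1 : μ * ((ℓ : ℝ) * D') = (ℓ : ℝ) * D := by
          rw [hD']; field_simp
        have hℓk : (ℓ : ℝ) ≤ (k : ℝ) := by exact_mod_cast h2
        have e2 : μ * ((ℓ : ℝ) * (n : ℝ)) ≤ ε * D := by
          have : μ * ((k : ℝ) * (n : ℝ)) = ε * D := by
            rw [hμ]; field_simp
          nlinarith [mul_le_mul_of_nonneg_left (mul_le_mul_of_nonneg_right hℓk hnpos.le) hμpos.le]
        linarith [e1.le, e2]
end

section
/- Let μ = εD/(kn), s'_i = ⌊s_i/μ⌋, and let x̂ maximize z'(x) = Σ_{j=1}^k (k-j+1)·Σ_i s'_i·x_{ij} over all valid assignments satisfying the scaled cascading constraints. Then for any valid assignment x satisfying the original cascading constraints Σ_{j≤ℓ} Q_j(x) ≤ ℓD, we have z(x̂) ≥ z(x) - εkD, where z(y) = Σ_{j=1}^k (k-j+1)·Σ_i s_i·y_{ij}. -/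
/-- A valid assignment: an n×k binary matrix with one reorder per individual cycle. -/
def RSPValid (n k : ℕ) (kc : ℕ → ℕ) (x : ℕ → ℕ → ℝ) : Prop :=
  (∀ i j, x i j = 0 ∨ x i j = 1) ∧
  (∀ i < n, ∑ j ∈ Finset.Icc 1 (kc i), x i j = 1) ∧
  (∀ i < n, ∀ j, kc i < j → j ≤ k → x i j = x i (j - kc i))

/-- The RSP objective with sizes `s`. -/
noncomputable def RSPz (n k : ℕ) (s : ℕ → ℝ) (x : ℕ → ℕ → ℝ) : ℝ :=
  ∑ j ∈ Finset.Icc 1 k, ((k : ℝ) - (j : ℝ) + 1) * ∑ i ∈ Finset.range n, s i * x i j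

/-- Let `μ = εD/(kn)`, `s' i = ⌊s i/μ⌋`, and let `x̂` maximize the scaled
objective `z'` over valid assignments satisfying the scaled cascading constraints. Then for
any valid assignment `x` satisfying the original cascading constraints,
`z(x̂) ≥ z(x) - εkD`. -/
theorem stmt_7 (n k : ℕ) (kc : ℕ → ℕ) (s : ℕ → ℝ) (s' : ℕ → ℤ)
    (xhat : ℕ → ℕ → ℝ) (μ ε D : ℝ)
    (hn : 0 < n) (hk : 0 < k) (hε : 0 < ε)
    (hkc : ∀ i < n, 0 < kc i ∧ kc i ∣ k)
    (hs : ∀ i < n, 0 < s i)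
    (hD : D = ∑ i ∈ Finset.range n, s i / (kc i : ℝ)) (hDpos : 0 < D)
    (hμ : μ = ε * D / ((k : ℝ) * (n : ℝ)))
    (hs' : ∀ i, s' i = ⌊s i / μ⌋)
    (hhatvalid : RSPValid n k kc xhat)
    (hhatscaled : ∀ ℓ, 1 ≤ ℓ → ℓ ≤ k →
      ∑ j ∈ Finset.Icc 1 ℓ, ∑ i ∈ Finset.range n, (s' i : ℝ) * xhat i j ≤ (ℓ : ℝ) * D / μ)
    (hhatopt : ∀ y : ℕ → ℕ → ℝ, RSPValid n k kc y →
      (∀ ℓ, 1 ≤ ℓ → ℓ ≤ k →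
        ∑ j ∈ Finset.Icc 1 ℓ, ∑ i ∈ Finset.range n, (s' i : ℝ) * y i j ≤ (ℓ : ℝ) * D / μ) →
      RSPz n k (fun i => (s' i : ℝ)) y ≤ RSPz n k (fun i => (s' i : ℝ)) xhat) :
    ∀ x : ℕ → ℕ → ℝ, RSPValid n k kc x →
      (∀ ℓ, 1 ≤ ℓ → ℓ ≤ k →
        ∑ j ∈ Finset.Icc 1 ℓ, ∑ i ∈ Finset.range n, s i * x i j ≤ (ℓ : ℝ) * D) →
      RSPz n k s x - ε * (k : ℝ) * D ≤ RSPz n k s xhat := by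
  intro x hxval hxcasc
  obtain ⟨hx01, hxsum, hxper⟩ := hxval
  have hknR : (0:ℝ) < (k:ℝ) * (n:ℝ) := by positivity
  have hμpos : 0 < μ := by rw [hμ]; positivity
  have hxnn : ∀ i j, 0 ≤ x i j := fun i j => by rcases hx01 i j with h|h <;> simp [h]
  have hhnn : ∀ i j, 0 ≤ xhat i j := fun i j => by
    rcases hhatvalid.1 i j with h|h <;> simp [h]
  have hfl : ∀ i, i < n → (s' i : ℝ) ≤ s i / μ := fun i _ => by
    rw [hs' i]; exact Int.floor_le _
  have hμs' : ∀ i, i < n → μ * (s' i : ℝ) ≤ s i := by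
    intro i hi
    have := hfl i hi
    calc μ * (s' i : ℝ) ≤ μ * (s i / μ) := by
          exact mul_le_mul_of_nonneg_left this hμpos.le
      _ = s i := by field_simp
  have hsub : ∀ i, i < n → s i - μ * (s' i : ℝ) ≤ μ := by
    intro i hi
    have h1 : s i / μ < (s' i : ℝ) + 1 := by rw [hs' i]; exact Int.lt_floor_add_one _
    have : s i < μ * ((s' i : ℝ) + 1) := by
      have := mul_lt_mul_of_pos_left h1 hμpos
      calc s i = μ * (s i / μ) := by field_simp
        _ < μ * ((s' i : ℝ) + 1) := this
    nlinarith
  -- x is feasible for the scaled constraints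
  have hxscaled : ∀ ℓ, 1 ≤ ℓ → ℓ ≤ k →
      ∑ j ∈ Finset.Icc 1 ℓ, ∑ i ∈ Finset.range n, (s' i : ℝ) * x i j ≤ (ℓ : ℝ) * D / μ := by
    intro ℓ h1 h2
    have step : ∑ j ∈ Finset.Icc 1 ℓ, ∑ i ∈ Finset.range n, (s' i : ℝ) * x i j
        ≤ ∑ j ∈ Finset.Icc 1 ℓ, ∑ i ∈ Finset.range n, (s i * x i j) / μ := by
      refine Finset.sum_le_sum fun j _ => Finset.sum_le_sum fun i hi => ?_
      have hi' := Finset.mem_range.mp hi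
      have : (s' i : ℝ) * x i j ≤ (s i / μ) * x i j :=
        mul_le_mul_of_nonneg_right (hfl i hi') (hxnn i j)
      calc (s' i : ℝ) * x i j ≤ (s i / μ) * x i j := this
        _ = (s i * x i j) / μ := by ring
    calc ∑ j ∈ Finset.Icc 1 ℓ, ∑ i ∈ Finset.range n, (s' i : ℝ) * x i j
        ≤ ∑ j ∈ Finset.Icc 1 ℓ, ∑ i ∈ Finset.range n, (s i * x i j) / μ := step
      _ = (∑ j ∈ Finset.Icc 1 ℓ, ∑ i ∈ Finset.range n, s i * x i j) / μ := by
          rw [Finset.sum_div]; exact Finset.sum_congr rfl fun j _ => by rw [Finset.sum_div]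
      _ ≤ (ℓ : ℝ) * D / μ := by
          exact div_le_div_of_nonneg_right (hxcasc ℓ h1 h2) hμpos.le |>.trans_eq rfl
  have hopt := hhatopt x ⟨hx01, hxsum, hxper⟩ hxscaled
  -- z(x) - μ z'(x) ≤ ε k D
  have hcoefnn : ∀ j ∈ Finset.Icc 1 k, (0:ℝ) ≤ (k:ℝ) - (j:ℝ) + 1 := by
    intro j hj
    have := (Finset.mem_Icc.mp hj).2
    have : (j:ℝ) ≤ (k:ℝ) := by exact_mod_cast this
    linarith
  have hcoefle : ∀ j ∈ Finset.Icc 1 k, (k:ℝ) - (j:ℝ) + 1 ≤ (k:ℝ) := by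
    intro j hj
    have := (Finset.mem_Icc.mp hj).1
    have : (1:ℝ) ≤ (j:ℝ) := by exact_mod_cast this
    linarith
  have hdiff : RSPz n k s x - μ * RSPz n k (fun i => (s' i : ℝ)) x ≤ ε * (k:ℝ) * D := by
    have heq : RSPz n k s x - μ * RSPz n k (fun i => (s' i : ℝ)) x
        = ∑ j ∈ Finset.Icc 1 k, ((k:ℝ) - (j:ℝ) + 1) *
            ∑ i ∈ Finset.range n, (s i - μ * (s' i : ℝ)) * x i j := by
      unfold RSPz
      rw [Finset.mul_sum, ← Finset.sum_sub_distrib]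
      refine Finset.sum_congr rfl fun j _ => ?_
      rw [Finset.mul_sum, Finset.mul_sum, Finset.mul_sum, ← Finset.sum_sub_distrib,
        Finset.mul_sum]
      exact Finset.sum_congr rfl fun i _ => by ring
    rw [heq]
    have hbound : ∀ j ∈ Finset.Icc 1 k,
        ((k:ℝ) - (j:ℝ) + 1) * ∑ i ∈ Finset.range n, (s i - μ * (s' i : ℝ)) * x i j
          ≤ (k:ℝ) * ((n:ℝ) * μ) := by
      intro j hj
      have hinner : ∑ i ∈ Finset.range n, (s i - μ * (s' i : ℝ)) * x i j ≤ (n:ℝ) * μ := by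
        calc ∑ i ∈ Finset.range n, (s i - μ * (s' i : ℝ)) * x i j
            ≤ ∑ i ∈ Finset.range n, μ := by
              refine Finset.sum_le_sum fun i hi => ?_
              have hi' := Finset.mem_range.mp hi
              rcases hx01 i j with h|h
              · simp [h]; exact hμpos.le
              · simp [h]; linarith [hsub i hi']
          _ = (n:ℝ) * μ := by simp [Finset.sum_const, mul_comm]
      have hinnn : 0 ≤ ∑ i ∈ Finset.range n, (s i - μ * (s' i : ℝ)) * x i j := by
        refine Finset.sum_nonneg fun i hi => ?_
        have hi' := Finset.mem_range.mp hi
        have := hμs' i hi'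
        exact mul_nonneg (by linarith) (hxnn i j)
      calc ((k:ℝ) - (j:ℝ) + 1) * ∑ i ∈ Finset.range n, (s i - μ * (s' i : ℝ)) * x i j
          ≤ (k:ℝ) * ∑ i ∈ Finset.range n, (s i - μ * (s' i : ℝ)) * x i j :=
            mul_le_mul_of_nonneg_right (hcoefle j hj) hinnn
        _ ≤ (k:ℝ) * ((n:ℝ) * μ) := by
            exact mul_le_mul_of_nonneg_left hinner (by positivity)
    calc ∑ j ∈ Finset.Icc 1 k, ((k:ℝ) - (j:ℝ) + 1) *
          ∑ i ∈ Finset.range n, (s i - μ * (s' i : ℝ)) * x i j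
        ≤ ∑ j ∈ Finset.Icc 1 k, (k:ℝ) * ((n:ℝ) * μ) := Finset.sum_le_sum hbound
      _ = (k:ℝ) * ((k:ℝ) * ((n:ℝ) * μ)) := by
          rw [Finset.sum_const, Nat.card_Icc]; simp
      _ = ε * (k:ℝ) * D := by
          rw [hμ]; field_simp
  -- μ z'(xhat) ≤ z(xhat)
  have hlast : μ * RSPz n k (fun i => (s' i : ℝ)) xhat ≤ RSPz n k s xhat := by
    unfold RSPz
    rw [Finset.mul_sum]
    refine Finset.sum_le_sum fun j hj => ?_
    rw [← mul_assoc, mul_comm μ ((k:ℝ) - (j:ℝ) + 1), mul_assoc, Finset.mul_sum]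
    refine mul_le_mul_of_nonneg_left ?_ (hcoefnn j hj)
    refine Finset.sum_le_sum fun i hi => ?_
    have hi' := Finset.mem_range.mp hi
    calc μ * ((s' i : ℝ) * xhat i j) = (μ * (s' i : ℝ)) * xhat i j := by ring
      _ ≤ s i * xhat i j := mul_le_mul_of_nonneg_right (hμs' i hi') (hhnn i j)
  have h2 : μ * RSPz n k (fun i => (s' i : ℝ)) x ≤ μ * RSPz n k (fun i => (s' i : ℝ)) xhat :=
    mul_le_mul_of_nonneg_left hopt hμpos.le
  linarith
end

section
/- The dynamic programming recursion is correct: for h ≥ 1 and any integer array (q_1,...,q_k) with the feasible set nonempty, f_h(q_1,...,q_k) = max over τ ∈ {1,...,k_h} with q'_ℓ(τ) ≥ 0 for all ℓ of [((k+k_h)/2 + 1 - τ)·(k/k_h)·s_h + f_{h-1}(q'_1(τ),...,q'_k(τ))], where q'_ℓ(τ) = q_ℓ - ⌊(ℓ - τ + k_h)/k_h⌋·s_h. -/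
open scoped Classical

/-- Feasibility of a binary assignment `x` of the first `h` items (indices `0,...,h-1`):
each item `i` is reordered exactly once per `kc i` time units, and the cumulative reorder
sizes up to time `ℓ` are at most `q ℓ` for `ℓ = 1,...,k`. -/
def DPFeasible (k h : ℕ) (kc : ℕ → ℕ) (s : ℕ → ℤ) (q : ℕ → ℤ) (x : ℕ → ℕ → ℤ) : Prop :=
  (∀ i j, x i j = 0 ∨ x i j = 1) ∧
  (∀ i < h, ∑ j ∈ Finset.Icc 1 (kc i), x i j = 1) ∧
  (∀ i < h, ∀ j, kc i < j → j ≤ k → x i j = x i (j - kc i)) ∧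
  (∀ ℓ, 1 ≤ ℓ → ℓ ≤ k → ∑ j ∈ Finset.Icc 1 ℓ, ∑ i ∈ Finset.range h, s i * x i j ≤ q ℓ)

/-- The objective value of an assignment of the first `h` items. -/
noncomputable def DPobj (k h : ℕ) (s : ℕ → ℤ) (x : ℕ → ℕ → ℤ) : ℝ :=
  ∑ j ∈ Finset.Icc 1 k, ((k : ℝ) - (j : ℝ) + 1) * ∑ i ∈ Finset.range h, (s i : ℝ) * (x i j : ℝ)

/-- The dynamic programming function `f_h(q)`: the supremum (in `EReal`, so `⊥ = -∞` if
infeasible) of the objective over feasible assignments of the first `h` items. -/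
noncomputable def DPf (k : ℕ) (kc : ℕ → ℕ) (s : ℕ → ℤ) (h : ℕ) (q : ℕ → ℤ) : EReal :=
  sSup {v : EReal | ∃ x, DPFeasible k h kc s q x ∧ v = (DPobj k h s x : EReal)}

/-! In any feasible assignment, the binary, once-per-period sequence of item `h` is the periodic
schedule with ones at `τ, τ + k_h, τ + 2 k_h, …` for a unique phase `τ ∈ [1, k_h]`. Fixing that
phase, the item orders `⌊(ℓ - τ + k_h)/k_h⌋ · s_h` in times `1, …, ℓ` and contributes
`Σ_{i < k/k_h} (k - τ - i k_h + 1) · s_h = ((k + k_h)/2 + 1 - τ)(k/k_h) s_h` to the objective,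
so the remaining items form exactly a feasible assignment for the residual capacities `q'(τ)`.
Conversely, any such assignment extends by the schedule of phase `τ`. Taking suprema over both
sides (a finite supremum over phases, and `c + sSup S = sSup (c + S)` in `EReal`) gives the
recursion. The phase of a feasible assignment always passes the filter `q'(τ) ≥ 0`, because
with nonnegative sizes every capacity admitting a feasible assignment is nonnegative. -/

open Finset

noncomputable def periodicSchedule (τ m j : ℕ) : ℤ :=
  if ∃ i, j = τ + i * m then 1 else 0

/-- The paper's `q'_ℓ(τ)` for an item of size `σ` and period `m`. -/
def residualCap (q : ℕ → ℤ) (σ : ℤ) (m τ ℓ : ℕ) : ℤ :=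
  q ℓ - (((ℓ : ℤ) - τ + m) / m) * σ

theorem exists_eq_ite_of_sum_eq_one {α : Type*} [DecidableEq α] {s : Finset α} {x : α → ℤ}
    (hbin : ∀ j, x j = 0 ∨ x j = 1) (hsum : ∑ j ∈ s, x j = 1) :
    ∃ τ ∈ s, ∀ j ∈ s, x j = if j = τ then 1 else 0 := by
  have hx : ∀ j, x j = if x j = 1 then 1 else 0 := fun j => by
    rcases hbin j with h | h <;> simp [h]
  rw [sum_congr rfl fun j _ => hx j, sum_boole, Nat.cast_eq_one, card_eq_one] at hsum
  obtain ⟨τ, hτ⟩ := hsum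
  have hmem : ∀ j, j ∈ s ∧ x j = 1 ↔ j = τ := fun j => by
    simpa using Finset.ext_iff.1 hτ j
  refine ⟨τ, ((hmem τ).2 rfl).1, fun j hj => ?_⟩
  rw [hx j]
  exact if_congr (by simpa [hj] using hmem j) rfl rfl

theorem periodicSchedule_of_le {τ m j : ℕ} (hτ : 1 ≤ τ) (hj : j ≤ m) :
    periodicSchedule τ m j = if j = τ then 1 else 0 := by
  refine if_congr ⟨?_, fun h => ⟨0, by simpa using h⟩⟩ rfl rfl
  rintro ⟨_ | i, rfl⟩
  · simp
  · rw [Nat.succ_mul] at hj; omega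

theorem periodicSchedule_sub {τ m j : ℕ} (hτ : τ ≤ m) (hj : m < j) :
    periodicSchedule τ m (j - m) = periodicSchedule τ m j := by
  refine if_congr ⟨fun ⟨i, hi⟩ => ⟨i + 1, by rw [Nat.succ_mul]; omega⟩, ?_⟩ rfl rfl
  rintro ⟨_ | i, rfl⟩
  · omega
  · exact ⟨i, by rw [Nat.succ_mul]; omega⟩

theorem sum_Icc_periodicSchedule_self {τ m : ℕ} (hτ1 : 1 ≤ τ) (hτm : τ ≤ m) :
    ∑ j ∈ Icc 1 m, periodicSchedule τ m j = 1 := by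
  rw [sum_congr rfl fun j hj => periodicSchedule_of_le hτ1 (mem_Icc.1 hj).2, sum_ite_eq',
    if_pos (mem_Icc.2 ⟨hτ1, hτm⟩)]

theorem exists_eqOn_periodicSchedule {k m : ℕ} {x : ℕ → ℤ} (hbin : ∀ j, x j = 0 ∨ x j = 1)
    (hsum : ∑ j ∈ Icc 1 m, x j = 1) (hper : ∀ j, m < j → j ≤ k → x j = x (j - m)) :
    ∃ τ ∈ Icc 1 m, ∀ j, 1 ≤ j → j ≤ k → x j = periodicSchedule τ m j := by
  obtain ⟨τ, hτ, hxτ⟩ := exists_eq_ite_of_sum_eq_one hbin hsum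
  obtain ⟨hτ1, hτm⟩ := mem_Icc.1 hτ
  refine ⟨τ, hτ, fun j => ?_⟩
  induction j using Nat.strong_induction_on with
  | _ j ih =>
    intro hj1 hjk
    rcases le_or_gt j m with hjm | hjm
    · rw [hxτ j (mem_Icc.2 ⟨hj1, hjm⟩), periodicSchedule_of_le hτ1 hjm]
    · rw [hper j hjm hjk, ih (j - m) (by omega) (by omega) (by omega),
        periodicSchedule_sub hτm hjm]

theorem sum_Icc_mul_periodicSchedule {R : Type*} [Ring R] {τ m : ℕ} (hm : 0 < m) (hτ : 1 ≤ τ)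
    (ℓ : ℕ) (f : ℕ → R) :
    ∑ j ∈ Icc 1 ℓ, f j * (periodicSchedule τ m j : R) =
      ∑ i ∈ range ((ℓ + m - τ) / m), f (τ + i * m) := by
  have hle : ∀ i, τ + i * m ≤ ℓ ↔ i < (ℓ + m - τ) / m := fun i => by
    rw [Nat.lt_iff_add_one_le, Nat.le_div_iff_mul_le hm, Nat.succ_mul]
    omega
  have hinj : ∀ a ∈ range ((ℓ + m - τ) / m), ∀ b ∈ range ((ℓ + m - τ) / m),
      τ + a * m = τ + b * m → a = b := fun a _ b _ hab =>
    Nat.eq_of_mul_eq_mul_right hm (by omega)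
  have hsupp : (Icc 1 ℓ).filter (fun j => ∃ i, j = τ + i * m) =
      (range ((ℓ + m - τ) / m)).image (fun i => τ + i * m) := by
    ext j
    simp only [mem_filter, mem_Icc, mem_image, mem_range]
    constructor
    · rintro ⟨⟨-, hjℓ⟩, i, rfl⟩
      exact ⟨i, (hle i).1 hjℓ, rfl⟩
    · rintro ⟨i, hi, rfl⟩
      exact ⟨⟨by omega, (hle i).2 hi⟩, i, rfl⟩
  simp only [periodicSchedule, Int.cast_ite, Int.cast_one, Int.cast_zero, mul_ite, mul_one,
    mul_zero]
  rw [← sum_filter, hsupp, sum_image hinj]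

theorem sum_Icc_periodicSchedule {τ m : ℕ} (hτ1 : 1 ≤ τ) (hτm : τ ≤ m) (ℓ : ℕ) :
    ∑ j ∈ Icc 1 ℓ, periodicSchedule τ m j = ((ℓ : ℤ) - τ + m) / m := by
  have h := sum_Icc_mul_periodicSchedule (R := ℤ) (hτ1.trans hτm) hτ1 ℓ 1
  simp only [Pi.one_apply, one_mul, Int.cast_id, sum_const, card_range, nsmul_eq_mul,
    mul_one] at h
  rw [h, Int.natCast_div, Nat.cast_sub (by omega)]
  push_cast
  ring_nf

theorem sum_Icc_weight_mul_periodicSchedule {k τ m : ℕ} (hdvd : m ∣ k) (hτ1 : 1 ≤ τ)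
    (hτm : τ ≤ m) :
    ∑ j ∈ Icc 1 k, ((k : ℝ) - j + 1) * (periodicSchedule τ m j : ℝ) =
      (((k : ℝ) + m) / 2 + 1 - τ) * ((k : ℝ) / m) := by
  obtain ⟨c, rfl⟩ := hdvd
  have gauss : (∑ i ∈ range c, (i : ℝ)) * 2 = c * (c - 1) := by
    induction c with
    | zero => simp
    | succ c ih => rw [sum_range_succ, add_mul, ih]; push_cast; ring
  have hm : 0 < m := hτ1.trans hτm
  have hc : (m * c + m - τ) / m = c :=
    Nat.div_eq_of_lt_le (by rw [mul_comm]; omega) (by rw [Nat.succ_mul, mul_comm]; omega)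
  have hterm : ∀ i ∈ range c, ((m * c : ℕ) : ℝ) - ((τ + i * m : ℕ) : ℝ) + 1 =
      ((m : ℝ) * c - τ + 1) - m * i := fun i _ => by push_cast; ring
  rw [sum_Icc_mul_periodicSchedule hm hτ1, hc, sum_congr rfl hterm, sum_sub_distrib, sum_const,
    card_range, nsmul_eq_mul, ← mul_sum, Nat.cast_mul, mul_div_cancel_left₀ _ (by positivity)]
  linear_combination (-(m : ℝ) / 2) * gauss

theorem sum_sum_range_succ_mul (t : Finset ℕ) (h : ℕ) (s : ℕ → ℤ) (x : ℕ → ℕ → ℤ) :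
    ∑ j ∈ t, ∑ i ∈ range (h + 1), s i * x i j =
      ∑ j ∈ t, ∑ i ∈ range h, s i * x i j + s h * ∑ j ∈ t, x h j := by
  simp only [sum_range_succ, sum_add_distrib, mul_sum]

section Feasibility

variable {k h : ℕ} {kc : ℕ → ℕ} {s : ℕ → ℤ} {q : ℕ → ℤ} {x : ℕ → ℕ → ℤ} {τ : ℕ}

theorem DPFeasible.cap_nonneg (hx : DPFeasible k h kc s q x) (hs : ∀ i < h, 0 ≤ s i) {ℓ : ℕ}
    (hℓ1 : 1 ≤ ℓ) (hℓk : ℓ ≤ k) : 0 ≤ q ℓ :=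
  (sum_nonneg fun j _ => sum_nonneg fun i hi =>
    mul_nonneg (hs i (mem_range.1 hi)) (by rcases hx.1 i j with hij | hij <;> simp [hij])).trans
    (hx.2.2.2 ℓ hℓ1 hℓk)

theorem DPFeasible.of_succ (hx : DPFeasible k (h + 1) kc s q x) (hτ1 : 1 ≤ τ) (hτm : τ ≤ kc h)
    (hxh : ∀ j, 1 ≤ j → j ≤ k → x h j = periodicSchedule τ (kc h) j) :
    DPFeasible k h kc s (residualCap q (s h) (kc h) τ) x := by
  obtain ⟨hbin, hone, hper, hcap⟩ := hx
  refine ⟨hbin, fun i hi => hone i (by omega), fun i hi => hper i (by omega), fun ℓ hℓ1 hℓk => ?_⟩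
  have hcum : ∑ j ∈ Icc 1 ℓ, x h j = ((ℓ : ℤ) - τ + kc h) / kc h := by
    rw [← sum_Icc_periodicSchedule hτ1 hτm]
    exact sum_congr rfl fun j hj => hxh j (mem_Icc.1 hj).1 ((mem_Icc.1 hj).2.trans hℓk)
  have := hcap ℓ hℓ1 hℓk
  rw [sum_sum_range_succ_mul, hcum] at this
  rw [residualCap]
  linarith

theorem DPFeasible.update_periodicSchedule
    (hx : DPFeasible k h kc s (residualCap q (s h) (kc h) τ) x) (hτ1 : 1 ≤ τ) (hτm : τ ≤ kc h) :
    DPFeasible k (h + 1) kc s q (Function.update x h (periodicSchedule τ (kc h))) := by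
  obtain ⟨hbin, hone, hper, hcap⟩ := hx
  refine ⟨fun i j => ?_, fun i hi => ?_, fun i hi j hj hjk => ?_, fun ℓ hℓ1 hℓk => ?_⟩
  · rcases eq_or_ne i h with rfl | hih
    · simp only [Function.update_self, periodicSchedule]
      split_ifs <;> simp
    · simpa [hih] using hbin i j
  · rcases eq_or_ne i h with rfl | hih
    · simpa using sum_Icc_periodicSchedule_self hτ1 hτm
    · simpa [hih] using hone i (by omega)
  · rcases eq_or_ne i h with rfl | hih
    · simpa using (periodicSchedule_sub hτm hj).symm
    · simpa [hih] using hper i (by omega) j hj hjk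
  · have hrest : ∀ j, ∑ i ∈ range h, s i * Function.update x h (periodicSchedule τ (kc h)) i j =
        ∑ i ∈ range h, s i * x i j := fun j =>
      sum_congr rfl fun i hi => by rw [Function.update_of_ne (mem_range.1 hi).ne]
    have := hcap ℓ hℓ1 hℓk
    rw [residualCap] at this
    simp only [sum_sum_range_succ_mul, hrest, Function.update_self,
      sum_Icc_periodicSchedule hτ1 hτm]
    linarith

end Feasibility

theorem DPobj_congr {k h : ℕ} {s : ℕ → ℤ} {x y : ℕ → ℕ → ℤ} (hxy : ∀ i < h, x i = y i) :
    DPobj k h s x = DPobj k h s y :=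
  sum_congr rfl fun _ _ => congrArg _ <| sum_congr rfl fun i hi => by rw [hxy i (mem_range.1 hi)]

theorem DPobj_succ_of_eqOn {k h m τ : ℕ} {s : ℕ → ℤ} {x : ℕ → ℕ → ℤ} (hdvd : m ∣ k)
    (hτ1 : 1 ≤ τ) (hτm : τ ≤ m) (hxh : ∀ j, 1 ≤ j → j ≤ k → x h j = periodicSchedule τ m j) :
    DPobj k (h + 1) s x =
      (((k : ℝ) + m) / 2 + 1 - τ) * ((k : ℝ) / m) * s h + DPobj k h s x := by
  have hweight : ∑ j ∈ Icc 1 k, ((k : ℝ) - j + 1) * (x h j : ℝ) =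
      (((k : ℝ) + m) / 2 + 1 - τ) * ((k : ℝ) / m) := by
    rw [← sum_Icc_weight_mul_periodicSchedule hdvd hτ1 hτm]
    exact sum_congr rfl fun j hj => by rw [hxh j (mem_Icc.1 hj).1 (mem_Icc.1 hj).2]
  rw [← hweight, DPobj, DPobj, sum_mul, ← sum_add_distrib]
  exact sum_congr rfl fun j _ => by rw [sum_range_succ]; ring

theorem EReal.coe_add_sSup_le {c : ℝ} {S : Set EReal} {t : EReal} (h : ∀ v ∈ S, c + v ≤ t) :
    c + sSup S ≤ t := by
  have hc : ∀ a : EReal, a ≤ t - c ↔ a + c ≤ t := fun _ =>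
    EReal.le_sub_iff_add_le (Or.inl (EReal.coe_ne_bot c)) (Or.inl (EReal.coe_ne_top c))
  rw [add_comm, ← hc]
  exact sSup_le fun v hv => (hc v).2 (by rw [add_comm]; exact h v hv)

section DynamicProgramming

variable {k h : ℕ} {kc : ℕ → ℕ} {s : ℕ → ℤ} {q : ℕ → ℤ}

theorem le_DPf_succ {τ : ℕ} (hdvd : kc h ∣ k) (hτ1 : 1 ≤ τ) (hτm : τ ≤ kc h) :
    ((((k + kc h : ℝ) / 2 + 1 - τ) * ((k : ℝ) / kc h) * s h : ℝ) : EReal) +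
      DPf k kc s h (residualCap q (s h) (kc h) τ) ≤ DPf k kc s (h + 1) q := by
  refine EReal.coe_add_sSup_le ?_
  rintro _ ⟨y, hy, rfl⟩
  have hrest : DPobj k h s (Function.update y h (periodicSchedule τ (kc h))) = DPobj k h s y :=
    DPobj_congr fun i hi => Function.update_of_ne hi.ne ..
  refine le_sSup ⟨_, hy.update_periodicSchedule hτ1 hτm, ?_⟩
  rw [DPobj_succ_of_eqOn hdvd hτ1 hτm fun j _ _ => by rw [Function.update_self], hrest,
    EReal.coe_add]

theorem DPf_succ_le (hdvd : kc h ∣ k) (hs : ∀ i < h, 0 ≤ s i) :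
    DPf k kc s (h + 1) q ≤
      ((Icc 1 (kc h)).filter fun τ => ∀ ℓ, 1 ≤ ℓ → ℓ ≤ k →
        0 ≤ residualCap q (s h) (kc h) τ ℓ).sup fun τ =>
          ((((k + kc h : ℝ) / 2 + 1 - τ) * ((k : ℝ) / kc h) * s h : ℝ) : EReal) +
            DPf k kc s h (residualCap q (s h) (kc h) τ) := by
  refine sSup_le ?_
  rintro _ ⟨x, hx, rfl⟩
  obtain ⟨τ, hτ, hxh⟩ := exists_eqOn_periodicSchedule (hx.1 h) (hx.2.1 h h.lt_succ_self)
    (hx.2.2.1 h h.lt_succ_self)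
  obtain ⟨hτ1, hτm⟩ := mem_Icc.1 hτ
  have hres := hx.of_succ hτ1 hτm hxh
  have hτF : τ ∈ (Icc 1 (kc h)).filter fun τ => ∀ ℓ, 1 ≤ ℓ → ℓ ≤ k →
      0 ≤ residualCap q (s h) (kc h) τ ℓ := by
    simpa only [mem_filter] using ⟨hτ, fun ℓ => hres.cap_nonneg hs⟩
  refine le_trans ?_ (le_sup hτF)
  rw [DPobj_succ_of_eqOn hdvd hτ1 hτm hxh, EReal.coe_add]
  gcongr
  exact le_sSup ⟨x, hres, rfl⟩

end DynamicProgramming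

theorem stmt_15_general (n k : ℕ) (kc : ℕ → ℕ) (s : ℕ → ℤ) (h : ℕ) (q : ℕ → ℤ)
    (hh : h < n)
    (hkc : ∀ i < n, 0 < kc i ∧ kc i ∣ k)
    (hs : ∀ i < n, 0 < s i) :
    DPf k kc s (h + 1) q =
      ((Finset.Icc 1 (kc h)).filter (fun τ =>
          ∀ ℓ, 1 ≤ ℓ → ℓ ≤ k → 0 ≤ q ℓ - (((ℓ : ℤ) - τ + kc h) / (kc h : ℤ)) * s h)).sup
        (fun τ =>
          (((((k : ℝ) + (kc h : ℝ)) / 2 + 1 - (τ : ℝ)) * ((k : ℝ) / (kc h : ℝ)) * (s h : ℝ) : ℝ) : EReal)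
            + DPf k kc s h (fun ℓ => q ℓ - (((ℓ : ℤ) - τ + kc h) / (kc h : ℤ)) * s h)) := by
  have hdvd := (hkc h hh).2
  -- `Icc 1 (kc h)` was coerced to a `Finset ℤ` through the `Finset` monad; pull it back to `ℕ`.
  simp only [bind_pure_comp, fmap_def, filter_image, sup_image, Function.comp_def,
    Int.cast_natCast]
  refine le_antisymm (DPf_succ_le hdvd fun i hi => (hs i (by omega)).le) (Finset.sup_le ?_)
  intro τ hτ
  simp only [mem_filter, mem_Icc] at hτ
  exact le_DPf_succ hdvd hτ.1.1 hτ.1.2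

/-- correctness of the dynamic programming recursion. For `h + 1` items with
nonempty feasible set,
`f_{h+1}(q) = max_{τ ∈ {1,...,k_{h+1}}, q'(τ) ≥ 0} [((k+k_{h+1})/2 + 1 - τ)·(k/k_{h+1})·s_{h+1} + f_h(q'(τ))]`,
where `q' ℓ (τ) = q ℓ - ⌊(ℓ - τ + k_{h+1})/k_{h+1}⌋·s_{h+1}` (here the new item has index `h`). -/
theorem stmt_15 (n k : ℕ) (kc : ℕ → ℕ) (s : ℕ → ℤ) (h : ℕ) (q : ℕ → ℤ)
    (hk : 0 < k) (hh : h < n)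
    (hkc : ∀ i < n, 0 < kc i ∧ kc i ∣ k)
    (hs : ∀ i < n, 0 < s i)
    (hfeas : ∃ x, DPFeasible k (h + 1) kc s q x) :
    DPf k kc s (h + 1) q =
      ((Finset.Icc 1 (kc h)).filter (fun τ =>
          ∀ ℓ, 1 ≤ ℓ → ℓ ≤ k → 0 ≤ q ℓ - (((ℓ : ℤ) - τ + kc h) / (kc h : ℤ)) * s h)).sup
        (fun τ =>
          (((((k : ℝ) + (kc h : ℝ)) / 2 + 1 - (τ : ℝ)) * ((k : ℝ) / (kc h : ℝ)) * (s h : ℝ) : ℝ) : EReal)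
            + DPf k kc s h (fun ℓ => q ℓ - (((ℓ : ℤ) - τ + kc h) / (kc h : ℤ)) * s h)) :=
  stmt_15_general n k kc s h q hh hkc hs
end
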